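/- arXiv:2109.05465 — 6 statements merged into one kernel-verified Lean document; each statement's English description precedes it below -/
import Mathlib

section
/- For every b > 0 and every ω ∈ (0, π), the function k ↦ 1/(2cosh(2πbk) + 2cos ω) is Lebesgue integrable on ℝ and ∫_ℝ 1/(2cosh(2πbk) + 2cos ω) dk = ω/(2πb·sin ω). -/
/-!
Substituting `u = exp t` turns `dt / (2 cosh t + 2 cos ω)` into `du / ((u + cos ω)² + sin² ω)`,
whose primitive `arctan ((u + cos ω) / sin ω) / sin ω` increases from `(π/2 - ω) / sin ω` at
`u = 0` to `(π/2) / sin ω` at `u = ∞`. The factor `2πb` is a linear change of variables.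
-/

open MeasureTheory Real Filter Set Topology

theorem integrable_deriv_of_nonneg {f f' : ℝ → ℝ} {m n : ℝ}
    (hderiv : ∀ x, HasDerivAt f (f' x) x) (hf' : ∀ x, 0 ≤ f' x)
    (hbot : Tendsto f atBot (𝓝 m)) (htop : Tendsto f atTop (𝓝 n)) : Integrable f' := by
  have hIoi : IntegrableOn f' (Ioi 0) :=
    integrableOn_Ioi_deriv_of_nonneg' (fun x _ ↦ hderiv x) (fun x _ ↦ hf' x) htop
  have hIoi_neg : IntegrableOn (fun x ↦ f' (-x)) (Ioi 0) :=
    integrableOn_Ioi_deriv_of_nonneg' (g := fun x ↦ -f (-x))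
      (fun x _ ↦ by simpa using ((hderiv (-x)).comp x (hasDerivAt_neg x)).fun_neg)
      (fun x _ ↦ hf' (-x)) (hbot.comp tendsto_neg_atTop_atBot).neg
  have hIio : IntegrableOn f' (Iio 0) := by
    rw [← (Measure.measurePreserving_neg (volume : Measure ℝ)).integrableOn_comp_preimage
      (Homeomorph.neg ℝ).measurableEmbedding]
    simpa [Function.comp_def] using hIoi_neg
  rw [← integrableOn_univ, ← Iio_union_Ici (a := (0 : ℝ)), integrableOn_union,
    integrableOn_Ici_iff_integrableOn_Ioi]
  exact ⟨hIio, hIoi⟩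

theorem arctan_cos_div_sin {ω : ℝ} (hω : ω ∈ Ioo 0 π) :
    arctan (cos ω / sin ω) = π / 2 - ω := by
  have htan : tan (π / 2 - ω) = cos ω / sin ω := by
    rw [tan_eq_sin_div_cos, sin_pi_div_two_sub, cos_pi_div_two_sub]
  rw [← htan, arctan_tan] <;> linarith [hω.1, hω.2]

theorem exp_mul_two_cosh_add_two_cos (t ω : ℝ) :
    exp t * (2 * cosh t + 2 * cos ω) = (exp t + cos ω) ^ 2 + sin ω ^ 2 := by
  rw [cosh_eq, exp_neg]
  field_simp
  linear_combination -(sin_sq_add_cos_sq ω)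

theorem two_cosh_add_two_cos_pos {ω : ℝ} (hω : sin ω ≠ 0) (t : ℝ) :
    0 < 2 * cosh t + 2 * cos ω := by
  refine pos_of_mul_pos_right ?_ (exp_pos t).le
  rw [exp_mul_two_cosh_add_two_cos]
  positivity

theorem hasDerivAt_arctan_exp_add_cos_div_sin {ω : ℝ} (hω : sin ω ≠ 0) (t : ℝ) :
    HasDerivAt (fun t ↦ arctan ((exp t + cos ω) / sin ω) / sin ω)
      (1 / (2 * cosh t + 2 * cos ω)) t := by
  refine ((((hasDerivAt_exp t).add_const (cos ω)).div_const (sin ω)).arctan.div_const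
    (sin ω)).congr_deriv ?_
  have hinv : 1 / (2 * cosh t + 2 * cos ω) = exp t / ((exp t + cos ω) ^ 2 + sin ω ^ 2) := by
    rw [← exp_mul_two_cosh_add_two_cos, div_mul_cancel_left₀ (exp_pos t).ne', one_div]
  rw [hinv]
  field_simp
  ring

theorem tendsto_arctan_exp_add_cos_div_sin_atTop {ω : ℝ} (hω : 0 < sin ω) :
    Tendsto (fun t ↦ arctan ((exp t + cos ω) / sin ω) / sin ω) atTop (𝓝 (π / 2 / sin ω)) :=
  ((tendsto_arctan_atTop.mono_right nhdsWithin_le_nhds).comp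
    ((tendsto_exp_atTop.atTop_add tendsto_const_nhds).atTop_div_const hω)).div_const _

theorem tendsto_arctan_exp_add_cos_div_sin_atBot (ω : ℝ) :
    Tendsto (fun t ↦ arctan ((exp t + cos ω) / sin ω) / sin ω) atBot
      (𝓝 (arctan (cos ω / sin ω) / sin ω)) := by
  have h := ((continuous_arctan.tendsto _).comp
    ((tendsto_exp_atBot.add_const (cos ω)).div_const (sin ω))).div_const (sin ω)
  simpa using h

theorem integrable_one_div_two_cosh_add_two_cos {ω : ℝ} (hω : ω ∈ Set.Ioo 0 π) :
    Integrable fun t ↦ 1 / (2 * cosh t + 2 * cos ω) := by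
  have hsin : 0 < sin ω := sin_pos_of_pos_of_lt_pi hω.1 hω.2
  exact integrable_deriv_of_nonneg (hasDerivAt_arctan_exp_add_cos_div_sin hsin.ne')
    (fun t ↦ (one_div_pos.2 (two_cosh_add_two_cos_pos hsin.ne' t)).le)
    (tendsto_arctan_exp_add_cos_div_sin_atBot ω) (tendsto_arctan_exp_add_cos_div_sin_atTop hsin)

theorem integral_one_div_two_cosh_add_two_cos {ω : ℝ} (hω : ω ∈ Set.Ioo 0 π) :
    ∫ t, 1 / (2 * cosh t + 2 * cos ω) = ω / sin ω := by
  have hsin : 0 < sin ω := sin_pos_of_pos_of_lt_pi hω.1 hω.2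
  rw [integral_of_hasDerivAt_of_tendsto (hasDerivAt_arctan_exp_add_cos_div_sin hsin.ne')
    (integrable_one_div_two_cosh_add_two_cos hω) (tendsto_arctan_exp_add_cos_div_sin_atBot ω)
    (tendsto_arctan_exp_add_cos_div_sin_atTop hsin), arctan_cos_div_sin hω]
  ring

theorem resolvent_kernel_diagonal (b : ℝ) (hb : 0 < b) (ω : ℝ) (hω : ω ∈ Set.Ioo 0 π) :
    Integrable (fun k : ℝ => 1 / (2 * Real.cosh (2 * π * b * k) + 2 * Real.cos ω)) ∧
    (∫ k : ℝ, 1 / (2 * Real.cosh (2 * π * b * k) + 2 * Real.cos ω))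
      = ω / (2 * π * b * Real.sin ω) := by
  have hscale : 0 < 2 * π * b := by positivity
  refine ⟨(integrable_one_div_two_cosh_add_two_cos hω).comp_mul_left' hscale.ne', ?_⟩
  rw [Measure.integral_comp_mul_left (fun t ↦ 1 / (2 * cosh t + 2 * cos ω)),
    integral_one_div_two_cosh_add_two_cos hω, abs_of_pos (inv_pos.2 hscale), smul_eq_mul]
  field_simp
end

section
/- Let H be a complex Hilbert space, let A : H → H be a bounded self-adjoint operator with ⟨f, A f⟩ ≥ 0 for all f ∈ H, let Y : ℝ → B(H) be a map such that Y(k) is unitary for every k ∈ ℝ and such that k ↦ ⟨Y(k)h, A(Y(k)f)⟩ is measurable for all f, h ∈ H, and let g : ℝ → [0,∞) be Lebesgue integrable with ∫_ℝ g(k) dk = 1. Suppose B : H → H is a bounded operator satisfying ⟨h, B f⟩ = ∫_ℝ ⟨Y(k)h, A(Y(k)f)⟩ g(k) dk for all f, h ∈ H. Then for every n ∈ ℕ and every orthonormal family (e_1, …, e_n) in H one has ∑_{j=1}^{n} ⟨e_j, B e_j⟩ ≤ sup { ∑_{j=1}^{n} ⟨f_j, A f_j⟩ : (f_1, …, f_n)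 an orthonormal family in H }. -/
/-!
Each `Y k` is an isometry, so it carries the orthonormal family `e` to an orthonormal family
`Y k ∘ e`; hence `∑ j, re ⟪Y k (e j), A (Y k (e j))⟫` is bounded by the Ky Fan supremum for
every `k`. Averaging this pointwise bound against the probability density `g` gives the same bound
for `∑ j, re ⟪e j, B (e j)⟫`.
-/

open MeasureTheory

theorem ContinuousLinearMap.norm_inner_self_apply_le {𝕜 E : Type*} [RCLike 𝕜]
    [NormedAddCommGroup E] [InnerProductSpace 𝕜 E] (A : E →L[𝕜] E) (x : E) :
    ‖(inner 𝕜 x (A x) : 𝕜)‖ ≤ ‖A‖ * ‖x‖ ^ 2 :=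
  calc ‖(inner 𝕜 x (A x) : 𝕜)‖ ≤ ‖x‖ * ‖A x‖ := norm_inner_le_norm _ _
    _ ≤ ‖x‖ * (‖A‖ * ‖x‖) := by gcongr; exact A.le_opNorm x
    _ = ‖A‖ * ‖x‖ ^ 2 := by ring

section KyFan

variable {E ι : Type*} [NormedAddCommGroup E] [InnerProductSpace ℂ E] [Fintype ι]

theorem bddAbove_sum_re_inner_self_apply_orthonormal (A : E →L[ℂ] E) :
    BddAbove {r : ℝ | ∃ f : ι → E, Orthonormal ℂ f ∧
      r = ∑ j, (inner ℂ (f j) (A (f j)) : ℂ).re} := by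
  refine ⟨Fintype.card ι * ‖A‖, ?_⟩
  rintro r ⟨f, hf, rfl⟩
  calc ∑ j, (inner ℂ (f j) (A (f j)) : ℂ).re ≤ ∑ _j : ι, ‖A‖ := by
        refine Finset.sum_le_sum fun j _ => (Complex.re_le_norm _).trans ?_
        simpa [hf.1 j] using A.norm_inner_self_apply_le (f j)
    _ = Fintype.card ι * ‖A‖ := by simp

theorem sum_re_inner_self_apply_le_sSup (A : E →L[ℂ] E) {f : ι → E} (hf : Orthonormal ℂ f) :
    ∑ j, (inner ℂ (f j) (A (f j)) : ℂ).re ≤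
      sSup {r : ℝ | ∃ f : ι → E, Orthonormal ℂ f ∧
        r = ∑ j, (inner ℂ (f j) (A (f j)) : ℂ).re} :=
  le_csSup (bddAbove_sum_re_inner_self_apply_orthonormal A) ⟨f, hf, rfl⟩

end KyFan

theorem sum_re_integral_mul_le_of_forall_sum_re_le {α ι : Type*} [MeasurableSpace α]
    [Fintype ι] {μ : Measure α} {φ : ι → α → ℂ} {g : α → ℝ} {S : ℝ}
    (hφg : ∀ j, Integrable (fun k => φ j k * (g k : ℂ)) μ) (hg_nonneg : ∀ k, 0 ≤ g k)
    (hg_int : Integrable g μ) (hg_one : ∫ k, g k ∂μ = 1) (hS : ∀ k, ∑ j, (φ j k).re ≤ S) :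
    ∑ j, (∫ k, φ j k * (g k : ℂ) ∂μ).re ≤ S := by
  have hre : ∀ j, (∫ k, φ j k * (g k : ℂ) ∂μ).re = ∫ k, (φ j k).re * g k ∂μ := fun j => by
    rw [← RCLike.re_to_complex, ← integral_re (hφg j)]
    simp
  have hre_int : ∀ j, Integrable (fun k => (φ j k).re * g k) μ := fun j => by
    simpa [Complex.mul_re] using (hφg j).re
  calc ∑ j, (∫ k, φ j k * (g k : ℂ) ∂μ).re = ∫ k, ∑ j, (φ j k).re * g k ∂μ := by
        rw [integral_finsetSum _ fun j _ => hre_int j]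
        exact Finset.sum_congr rfl fun j _ => hre j
    _ ≤ ∫ k, S * g k ∂μ := by
        refine integral_mono (integrable_finsetSum _ fun j _ => hre_int j)
          (hg_int.const_mul S) fun k => ?_
        rw [← Finset.sum_mul]
        exact mul_le_mul_of_nonneg_right (hS k) (hg_nonneg k)
    _ = S := by rw [integral_const_mul, hg_one, mul_one]

theorem majorisation_by_unitary_average_general
    {H : Type*} [NormedAddCommGroup H] [InnerProductSpace ℂ H]
    (A : H →L[ℂ] H)
    (Y : ℝ → H →L[ℂ] H)
    (hY_isometry : ∀ (k : ℝ) (f h : H), (inner ℂ (Y k f) (Y k h) : ℂ) = inner ℂ f h)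
    (hmeas : ∀ f h : H, Measurable fun k : ℝ => (inner ℂ (Y k h) (A (Y k f)) : ℂ))
    (g : ℝ → ℝ) (hg_nonneg : ∀ k, 0 ≤ g k) (hg_int : Integrable g)
    (hg_one : (∫ k : ℝ, g k) = 1)
    (B : H →L[ℂ] H)
    (hB : ∀ f h : H, (inner ℂ h (B f) : ℂ) = ∫ k : ℝ, (inner ℂ (Y k h) (A (Y k f)) : ℂ) * (g k : ℂ))
    (n : ℕ) (e : Fin n → H) (he : Orthonormal ℂ e) :
    ∑ j, (inner ℂ (e j) (B (e j)) : ℂ).re ≤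
      sSup {r : ℝ | ∃ f : Fin n → H, Orthonormal ℂ f ∧
        r = ∑ j, (inner ℂ (f j) (A (f j)) : ℂ).re} := by
  have hYe : ∀ k, Orthonormal ℂ (fun j => Y k (e j)) := fun k =>
    he.comp_linearIsometry ((Y k : H →ₗ[ℂ] H).isometryOfInner (hY_isometry k))
  have hint : ∀ j, Integrable
      (fun k => (inner ℂ (Y k (e j)) (A (Y k (e j))) : ℂ) * (g k : ℂ)) := fun j =>
    hg_int.ofReal.bdd_mul (c := ‖A‖) (hmeas _ _).aestronglyMeasurable <| ae_of_all _ fun k => by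
      simpa [(hYe k).1 j] using A.norm_inner_self_apply_le (Y k (e j))
  simp only [hB]
  exact sum_re_integral_mul_le_of_forall_sum_re_le hint hg_nonneg hg_int hg_one fun k =>
    sum_re_inner_self_apply_le_sSup A (hYe k)

theorem majorisation_by_unitary_average
    {H : Type*} [NormedAddCommGroup H] [InnerProductSpace ℂ H] [CompleteSpace H]
    (A : H →L[ℂ] H)
    (hA_sa : ∀ f h : H, (inner ℂ (A f) h : ℂ) = inner ℂ f (A h))
    (hA_pos : ∀ f : H, 0 ≤ (inner ℂ f (A f) : ℂ).re)
    (Y : ℝ → H →L[ℂ] H)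
    (hY_isometry : ∀ (k : ℝ) (f h : H), (inner ℂ (Y k f) (Y k h) : ℂ) = inner ℂ f h)
    (hY_surj : ∀ k : ℝ, Function.Surjective (Y k))
    (hmeas : ∀ f h : H, Measurable fun k : ℝ => (inner ℂ (Y k h) (A (Y k f)) : ℂ))
    (g : ℝ → ℝ) (hg_nonneg : ∀ k, 0 ≤ g k) (hg_int : Integrable g)
    (hg_one : (∫ k : ℝ, g k) = 1)
    (B : H →L[ℂ] H)
    (hB : ∀ f h : H, (inner ℂ h (B f) : ℂ) = ∫ k : ℝ, (inner ℂ (Y k h) (A (Y k f)) : ℂ) * (g k : ℂ))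
    (n : ℕ) (e : Fin n → H) (he : Orthonormal ℂ e) :
    ∑ j, (inner ℂ (e j) (B (e j)) : ℂ).re ≤
      sSup {r : ℝ | ∃ f : Fin n → H, Orthonormal ℂ f ∧
        r = ∑ j, (inner ℂ (f j) (A (f j)) : ℂ).re} :=
  majorisation_by_unitary_average_general A Y hY_isometry hmeas g hg_nonneg hg_int hg_one B hB n e
    he
end

section
/- There exists a constant C > 0 such that for every ε ∈ (0, 1], ∫_ℝ 4 sinh²(x)/(cos²(ε) cosh²(x) + sin²(ε) sinh²(x))² dx ≤ C. -/
open MeasureTheory Real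

lemma ubqf_self_le_sinh {x : ℝ} (hx : 0 ≤ x) : x ≤ Real.sinh x := by
  rcases eq_or_lt_of_le hx with h | h
  · simp [← h]
  · exact (Real.self_lt_sinh_iff.2 h).le

lemma ubqf_sq_le_sinh_sq (x : ℝ) : x ^ 2 ≤ Real.sinh x ^ 2 := by
  have h1 : |x| ≤ |Real.sinh x| := by
    rw [Real.abs_sinh]
    exact ubqf_self_le_sinh (abs_nonneg x)
  calc x ^ 2 = |x| ^ 2 := (sq_abs x).symm
    _ ≤ |Real.sinh x| ^ 2 := pow_le_pow_left₀ (abs_nonneg x) h1 2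
    _ = Real.sinh x ^ 2 := sq_abs _


lemma ubqf_ineq {c d s a : ℝ} (hc0 : 0 < c) (hc1 : c ≤ 1) (hs : 0 ≤ s)
    (hcd : c ≤ d) (ha : 0 < a) (has : a ≤ 2 * (1 + s)) :
    4 * s / (d + s) ^ 2 ≤ 8 / c ^ 2 * a⁻¹ := by
  have hd0 : 0 < d + s := by linarith
  have hrhs : 8 / c ^ 2 * a⁻¹ = 8 / (c ^ 2 * a) := by
    field_simp
  rw [hrhs]
  rw [div_le_div_iff₀ (by positivity) (by positivity)]
  have hD2 : (c + s) ^ 2 ≤ (d + s) ^ 2 := by nlinarith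
  have hk : c ^ 2 * (s * (1 + s)) ≤ (c + s) ^ 2 := by
    nlinarith [mul_nonneg hs (sub_nonneg.2 hc1),
      mul_nonneg (mul_nonneg hs hs) (sub_nonneg.2 hc1),
      mul_nonneg hc0.le hs]
  nlinarith [mul_le_mul_of_nonneg_left has
      (by positivity : (0:ℝ) ≤ 4 * c ^ 2 * s)]

theorem uniform_bound_quadratic_form :
    ∃ C : ℝ, 0 < C ∧ ∀ ε ∈ Set.Ioc (0 : ℝ) 1,
      Integrable (fun x : ℝ => 4 * Real.sinh x ^ 2 /
        (Real.cos ε ^ 2 * Real.cosh x ^ 2 + Real.sin ε ^ 2 * Real.sinh x ^ 2) ^ 2) ∧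
      (∫ x : ℝ, 4 * Real.sinh x ^ 2 /
        (Real.cos ε ^ 2 * Real.cosh x ^ 2 + Real.sin ε ^ 2 * Real.sinh x ^ 2) ^ 2) ≤ C := by
  have hcos1 : (0:ℝ) < Real.cos 1 := Real.cos_one_pos
  set c : ℝ := Real.cos 1 ^ 2 with hc_def
  have hc0 : 0 < c := by positivity
  have hc1 : c ≤ 1 := by
    have := Real.cos_le_one (1 : ℝ)
    nlinarith
  set g : ℝ → ℝ := fun x => (8 / c ^ 2) * (1 + ‖x‖) ^ (-2 : ℝ) with hg_def
  have hg_int : Integrable g := by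
    apply Integrable.const_mul
    apply integrable_one_add_norm (E := ℝ)
    simp
  have hg_nonneg : ∀ x, 0 ≤ g x := fun x => by
    have h1 : (0:ℝ) ≤ (1 + ‖x‖) ^ (-2 : ℝ) := Real.rpow_nonneg (by positivity) _
    have h2 : (0:ℝ) ≤ 8 / c ^ 2 := by positivity
    exact mul_nonneg h2 h1
  have hgint_nonneg : 0 ≤ ∫ x, g x := integral_nonneg hg_nonneg
  refine ⟨(∫ x, g x) + 1, by linarith, ?_⟩
  intro ε hε
  obtain ⟨hε0, hε1⟩ := hε
  have hπ : (1:ℝ) ≤ Real.pi := by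
    have := Real.pi_gt_three; linarith
  have hcosε : Real.cos 1 ≤ Real.cos ε :=
    Real.cos_le_cos_of_nonneg_of_le_pi hε0.le hπ hε1
  have hcε : c ≤ Real.cos ε ^ 2 := by
    rw [hc_def]
    exact pow_le_pow_left₀ hcos1.le hcosε 2
  -- denominator identity and positivity
  have hden : ∀ x : ℝ, Real.cos ε ^ 2 * Real.cosh x ^ 2 + Real.sin ε ^ 2 * Real.sinh x ^ 2
      = Real.cos ε ^ 2 + Real.sinh x ^ 2 := by
    intro x
    have h1 : Real.cosh x ^ 2 = Real.sinh x ^ 2 + 1 := Real.cosh_sq x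
    have h2 : Real.sin ε ^ 2 + Real.cos ε ^ 2 = 1 := Real.sin_sq_add_cos_sq ε
    nlinarith [sq_nonneg (Real.sinh x)]
  have hDpos : ∀ x : ℝ, 0 < Real.cos ε ^ 2 * Real.cosh x ^ 2 + Real.sin ε ^ 2 * Real.sinh x ^ 2 := by
    intro x
    rw [hden x]
    nlinarith [sq_nonneg (Real.sinh x)]
  set f : ℝ → ℝ := fun x => 4 * Real.sinh x ^ 2 /
      (Real.cos ε ^ 2 * Real.cosh x ^ 2 + Real.sin ε ^ 2 * Real.sinh x ^ 2) ^ 2 with hf_def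
  have hf_nonneg : ∀ x, 0 ≤ f x := by
    intro x
    have := hDpos x
    positivity
  -- pointwise bound f ≤ g
  have hfg : ∀ x, f x ≤ g x := by
    intro x
    have hs : (0:ℝ) ≤ Real.sinh x ^ 2 := sq_nonneg _
    set s : ℝ := Real.sinh x ^ 2 with hs_def
    have hxs : x ^ 2 ≤ s := ubqf_sq_le_sinh_sq x
    have hrpow : (1 + ‖x‖) ^ (-2 : ℝ) = ((1 + |x|) ^ 2)⁻¹ := by
      rw [Real.norm_eq_abs, ← Real.rpow_natCast (1 + |x|) 2,
        ← Real.rpow_neg (by positivity)]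
      norm_num
    have habs : (1 + |x|) ^ 2 ≤ 2 * (1 + s) := by
      nlinarith [sq_abs x, sq_nonneg (|x| - 1), abs_nonneg x]
    have hD : Real.cos ε ^ 2 * Real.cosh x ^ 2 + Real.sin ε ^ 2 * Real.sinh x ^ 2
        = Real.cos ε ^ 2 + s := hden x
    show 4 * s / (Real.cos ε ^ 2 * Real.cosh x ^ 2 + Real.sin ε ^ 2 * Real.sinh x ^ 2) ^ 2
        ≤ (8 / c ^ 2) * (1 + ‖x‖) ^ (-2 : ℝ)
    rw [hD, hrpow]
    exact ubqf_ineq hc0 hc1 hs hcε (by positivity) habs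
  -- measurability
  have hf_cont : Continuous f := by
    apply Continuous.div (by fun_prop) (by fun_prop)
    intro x
    exact pow_ne_zero 2 (hDpos x).ne'
  have hf_int : Integrable f := by
    refine hg_int.mono' hf_cont.aestronglyMeasurable (ae_of_all _ fun x => ?_)
    rw [Real.norm_eq_abs, abs_of_nonneg (hf_nonneg x)]
    exact hfg x
  refine ⟨hf_int, ?_⟩
  have := integral_mono hf_int hg_int hfg
  linarith
end

section
/- Let b > 0 and let V : ℝ → ℝ be Lebesgue integrable with ∫_ℝ V(x) dx > 0. Then there exists ε ∈ (0, 1] such that ∫_ℝ 4 sinh²(πbk)·(πb/(2ε))²·(1/cosh²(π²bk/(2ε))) dk < ∫_ℝ V(x)/cosh²(2εx/b) dx. -/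
/-!
With `y = π b k`, the bounds `|sinh y| ≤ |y| e^{|y|}` and `1 / cosh² (π y / (2ε)) ≤ 4 e^{-π |y| / ε}`
show that for `ε ≤ 1` the integrand on the left is at most `4 (π b)⁴ u² e^{-π b (π - 2) |u|}` with
`u = k / ε`, so substituting `u` bounds the left-hand side by `C ε`. On the right, `cosh ≥ 1` lets
`|V|` dominate, so the integral tends to `∫ V > 0` as `ε → 0`.
-/

open MeasureTheory Real Filter Set Topology

namespace Real

theorem abs_sinh_le_abs_mul_exp_abs (x : ℝ) : |sinh x| ≤ |x| * exp |x| := by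
  rw [abs_sinh, sinh_eq]
  have hexp : exp (-|x|) = exp |x| * exp (-(2 * |x|)) := by rw [← exp_add]; ring_nf
  nlinarith [add_one_le_exp (-(2 * |x|)), exp_pos |x|]

theorem exp_abs_le_two_mul_cosh (x : ℝ) : exp |x| ≤ 2 * cosh x := by
  rw [cosh_eq]
  rcases abs_cases x with ⟨h, _⟩ | ⟨h, _⟩ <;> rw [h] <;> linarith [exp_pos x, exp_pos (-x)]

theorem sinh_sq_le_sq_mul_exp (x : ℝ) : sinh x ^ 2 ≤ x ^ 2 * exp (2 * |x|) := by
  rw [← sq_abs (sinh x), ← sq_abs x, two_mul, exp_add, ← sq, ← mul_pow]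
  exact pow_le_pow_left₀ (abs_nonneg _) (abs_sinh_le_abs_mul_exp_abs x) 2

theorem one_div_cosh_sq_le_four_mul_exp (x : ℝ) : 1 / cosh x ^ 2 ≤ 4 * exp (-(2 * |x|)) := by
  have h := pow_le_pow_left₀ (exp_pos _).le (exp_abs_le_two_mul_cosh x) 2
  rw [two_mul, neg_add, exp_add, ← sq, exp_neg, one_div, inv_pow]
  rw [← inv_le_inv₀ (by positivity) (by positivity)] at h
  linarith [show ((2 * cosh x) ^ 2)⁻¹ = (cosh x ^ 2)⁻¹ / 4 by ring]

end Real

theorem integrable_sq_mul_exp_neg_mul_abs {B : ℝ} (hB : 0 < B) :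
    Integrable fun u : ℝ => u ^ 2 * exp (-B * |u|) := by
  refine (by fun_prop : Continuous fun u : ℝ => u ^ 2 * exp (-B * |u|)).locallyIntegrable
    |>.integrable_of_isBigO_atTop_of_norm_isNegInvariant (g := fun u => exp (-(B / 2) * u))
    (Eventually.of_forall fun u => by simp [abs_neg]) ?_
    ⟨Ioi 0, Ioi_mem_atTop 0, exp_neg_integrableOn_Ioi 0 (half_pos hB)⟩
  have hpow : (fun u : ℝ => u ^ 2) =o[atTop] fun u => exp (B / 2 * u) :=
    isLittleO_pow_exp_pos_mul_atTop 2 (half_pos hB)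
  refine (hpow.mul_isBigO (Asymptotics.isBigO_refl (fun u => exp (-B * u)) _)).isBigO.congr'
    ?_ ?_
  · filter_upwards [eventually_ge_atTop 0] with u hu
    rw [abs_of_nonneg hu]
  · exact Eventually.of_forall fun u => by dsimp only; rw [← exp_add]; ring_nf

theorem sinh_sq_mul_one_div_cosh_sq_le {b ε : ℝ} (hb : 0 < b) (hε : ε ∈ Ioc (0 : ℝ) 1) (k : ℝ) :
    4 * sinh (π * b * k) ^ 2 * (π * b / (2 * ε)) ^ 2 * (1 / cosh (π ^ 2 * b * k / (2 * ε)) ^ 2)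
      ≤ 4 * (π * b) ^ 4 * ((k / ε) ^ 2 * exp (-(π * b * (π - 2)) * |k / ε|)) := by
  obtain ⟨hε0, hε1⟩ := hε
  have hπb : 0 < π * b := mul_pos pi_pos hb
  have hexponent : 2 * |π * b * k| - 2 * |π ^ 2 * b * k / (2 * ε)|
      ≤ -(π * b * (π - 2)) * |k / ε| := by
    rw [abs_mul (π * b), abs_div _ (2 * ε), abs_div k, abs_mul (π ^ 2 * b), abs_of_pos hπb,
      abs_of_pos hε0, abs_of_pos (by positivity : (0 : ℝ) < π ^ 2 * b),
      abs_of_pos (by positivity : (0 : ℝ) < 2 * ε)]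
    have hgain : 0 ≤ 2 * (π * b) * |k| * (1 - ε) / ε := by
      have := abs_nonneg k; have := sub_nonneg.2 hε1
      positivity
    have hdiff : -(π * b * (π - 2)) * (|k| / ε)
          - (2 * (π * b * |k|) - 2 * (π ^ 2 * b * |k| / (2 * ε)))
        = 2 * (π * b) * |k| * (1 - ε) / ε := by
      field_simp
      ring
    linarith
  calc 4 * sinh (π * b * k) ^ 2 * (π * b / (2 * ε)) ^ 2 * (1 / cosh (π ^ 2 * b * k / (2 * ε)) ^ 2)
      ≤ 4 * ((π * b * k) ^ 2 * exp (2 * |π * b * k|)) * (π * b / (2 * ε)) ^ 2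
          * (4 * exp (-(2 * |π ^ 2 * b * k / (2 * ε)|))) := by
        gcongr
        exacts [sinh_sq_le_sq_mul_exp _, one_div_cosh_sq_le_four_mul_exp _]
    _ = 4 * (π * b) ^ 4 * ((k / ε) ^ 2
          * exp (2 * |π * b * k| - 2 * |π ^ 2 * b * k / (2 * ε)|)) := by
        rw [sub_eq_add_neg, exp_add]
        field_simp
        ring
    _ ≤ 4 * (π * b) ^ 4 * ((k / ε) ^ 2 * exp (-(π * b * (π - 2)) * |k / ε|)) := by
        gcongr

theorem integral_sinh_sq_mul_one_div_cosh_sq_le {b ε : ℝ} (hb : 0 < b) (hε : ε ∈ Ioc (0 : ℝ) 1) :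
    ∫ k : ℝ, 4 * sinh (π * b * k) ^ 2 * (π * b / (2 * ε)) ^ 2 *
        (1 / cosh (π ^ 2 * b * k / (2 * ε)) ^ 2)
      ≤ 4 * (π * b) ^ 4 * (∫ u : ℝ, u ^ 2 * exp (-(π * b * (π - 2)) * |u|)) * ε := by
  have hB : 0 < π * b * (π - 2) := mul_pos (mul_pos pi_pos hb) (by linarith [pi_gt_three])
  calc ∫ k : ℝ, 4 * sinh (π * b * k) ^ 2 * (π * b / (2 * ε)) ^ 2 *
        (1 / cosh (π ^ 2 * b * k / (2 * ε)) ^ 2)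
      ≤ ∫ k : ℝ, 4 * (π * b) ^ 4 * ((k / ε) ^ 2 * exp (-(π * b * (π - 2)) * |k / ε|)) :=
        integral_mono_of_nonneg (Eventually.of_forall fun k => by positivity)
          (((integrable_comp_div_iff _ hε.1.ne').2
            (integrable_sq_mul_exp_neg_mul_abs hB)).const_mul _)
          (Eventually.of_forall (sinh_sq_mul_one_div_cosh_sq_le hb hε))
    _ = 4 * (π * b) ^ 4 * (∫ u : ℝ, u ^ 2 * exp (-(π * b * (π - 2)) * |u|)) * ε := by
        rw [integral_const_mul, Measure.integral_comp_div
          (fun u => u ^ 2 * exp (-(π * b * (π - 2)) * |u|)), abs_of_pos hε.1, smul_eq_mul]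
        ring

theorem tendsto_integral_div_cosh_sq_mul {μ : Measure ℝ} {V : ℝ → ℝ} (hV : Integrable V μ) :
    Tendsto (fun t => ∫ x, V x / cosh (t * x) ^ 2 ∂μ) (𝓝 0) (𝓝 (∫ x, V x ∂μ)) := by
  refine tendsto_integral_filter_of_dominated_convergence (fun x => |V x|)
    (Eventually.of_forall fun t => hV.aestronglyMeasurable.div₀
      (by fun_prop : Continuous fun x => cosh (t * x) ^ 2).aestronglyMeasurable)
    (Eventually.of_forall fun t => Eventually.of_forall fun x => ?_) hV.abs
    (Eventually.of_forall fun x => ?_)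
  · rw [norm_div, norm_pow, Real.norm_eq_abs, Real.norm_eq_abs, abs_of_pos (cosh_pos _)]
    exact div_le_self (abs_nonneg _) (one_le_pow₀ (one_le_cosh _))
  · have hcont : Continuous fun t => V x / cosh (t * x) ^ 2 :=
      continuous_const.div (by fun_prop) fun t => (pow_pos (cosh_pos _) 2).ne'
    simpa using hcont.tendsto 0

theorem eigenvalue_below_two_exists (b : ℝ) (hb : 0 < b) (V : ℝ → ℝ)
    (hVint : Integrable V) (hVpos : 0 < ∫ x, V x) :
    ∃ ε ∈ Set.Ioc (0 : ℝ) 1,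
      (∫ k : ℝ, 4 * Real.sinh (π * b * k) ^ 2 * (π * b / (2 * ε)) ^ 2 *
          (1 / Real.cosh (π ^ 2 * b * k / (2 * ε)) ^ 2))
        < ∫ x : ℝ, V x / Real.cosh (2 * ε * x / b) ^ 2 := by
  set C := 4 * (π * b) ^ 4 * ∫ u : ℝ, u ^ 2 * exp (-(π * b * (π - 2)) * |u|)
  have hscale : Tendsto (fun ε : ℝ => 2 * ε / b) (𝓝[>] 0) (𝓝 0) := by
    simpa using ((by fun_prop : Continuous fun ε : ℝ => 2 * ε / b).tendsto 0).mono_left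
      nhdsWithin_le_nhds
  have hRHS :
      Tendsto (fun ε => ∫ x, V x / cosh (2 * ε * x / b) ^ 2) (𝓝[>] 0) (𝓝 (∫ x, V x)) := by
    simpa only [Function.comp_def, mul_div_right_comm] using
      (tendsto_integral_div_cosh_sq_mul hVint).comp hscale
  have hLHS : Tendsto (fun ε => C * ε) (𝓝[>] 0) (𝓝 0) := by
    simpa using (tendsto_id.const_mul C).mono_left (nhdsWithin_le_nhds (a := (0 : ℝ)))
  obtain ⟨ε, hε, hgap⟩ :=
    (Eventually.and (Ioc_mem_nhdsGT zero_lt_one) (hLHS.eventually_lt hRHS hVpos)).exists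
  exact ⟨ε, hε, (integral_sinh_sq_mul_one_div_cosh_sq_le hb hε).trans_lt hgap⟩
end

section
/- Let b > 0 and ω ∈ (0, π), and define g_ω : ℝ → ℝ by g_ω(x) = (π/ω)·sinh(ωx/b)/sinh(πx/b) for x ≠ 0 and g_ω(0) = 1. Then g_ω is a positive-definite function: for every n ∈ ℕ, all points x_1, …, x_n ∈ ℝ and all complex numbers c_1, …, c_n, one has ∑_{i=1}^{n} ∑_{j=1}^{n} c_i·conj(c_j)·g_ω(x_i − x_j) ≥ 0 (the double sum is a nonnegative real number). -/
/-!
By Euler's product for `sinh`, with `r = ω / π`,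
`g_ω x = ∏_{j ≥ 1} (1 + (r x / (b j))²) / (1 + (x / (b j))²)`, and each factor is
`r² + (1 - r²) / (1 + u²)` at `u = x / (b j)`. The Cauchy kernel
`1 / (1 + u²) = ∫_0^∞ e^{-s} e^{-s u²} ds` is a mixture of Gaussians, and a Gaussian is the
characteristic function of a Gaussian measure, i.e. a mixture of the kernels `cos (ξ u)`.
Positive definiteness survives sums, nonnegative multiples, mixtures, pointwise limits and,
by Schur's product theorem, products; so it passes from `cos (ξ u)` all the way to `g_ω`.
-/

open Real
open scoped ComplexOrder

open Matrix Filter Topology MeasureTheory ProbabilityTheory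

def IsPosDefFun (f : ℝ → ℝ) : Prop :=
  ∀ ⦃n : ℕ⦄ (x : Fin n → ℝ), (Matrix.of fun i j => f (x i - x j)).PosSemidef

lemma isPosDefFun_const {c : ℝ} (hc : 0 ≤ c) : IsPosDefFun fun _ => c := by
  intro n x
  convert (posSemidef_vecMulVec_self_star fun _ : Fin n => (1 : ℝ)).smul hc using 1
  ext i j
  simp [vecMulVec]

lemma isPosDefFun_cos_mul (ξ : ℝ) : IsPosDefFun fun t => cos (ξ * t) := by
  intro n x
  convert (posSemidef_vecMulVec_self_star fun i => cos (ξ * x i)).add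
    (posSemidef_vecMulVec_self_star fun i => sin (ξ * x i)) using 1
  ext i j
  simp [vecMulVec, mul_sub, cos_sub]

namespace IsPosDefFun

variable {f g : ℝ → ℝ}

lemma add (hf : IsPosDefFun f) (hg : IsPosDefFun g) : IsPosDefFun fun t => f t + g t :=
  fun _ x => (hf x).add (hg x)

lemma const_mul (hf : IsPosDefFun f) {c : ℝ} (hc : 0 ≤ c) : IsPosDefFun fun t => c * f t :=
  fun _ x => (hf x).smul hc

lemma mul (hf : IsPosDefFun f) (hg : IsPosDefFun g) : IsPosDefFun fun t => f t * g t :=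
  fun _ x => (hf x).hadamard (hg x)

lemma comp_div (hf : IsPosDefFun f) (a : ℝ) : IsPosDefFun fun t => f (t / a) := by
  intro n x
  simpa only [sub_div] using hf fun i => x i / a

lemma finset_prod {ι : Type*} {s : Finset ι} {F : ι → ℝ → ℝ}
    (hF : ∀ i ∈ s, IsPosDefFun (F i)) : IsPosDefFun fun t => ∏ i ∈ s, F i t := by
  classical
  induction s using Finset.induction_on with
  | empty => simpa using isPosDefFun_const zero_le_one
  | insert i s hi ih =>
    simp only [Finset.prod_insert hi]
    exact (hF i (s.mem_insert_self i)).mul (ih fun j hj => hF j (Finset.mem_insert_of_mem hj))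

lemma of_tendsto {F : ℕ → ℝ → ℝ} (hF : ∀ N, IsPosDefFun (F N))
    (hlim : ∀ t, Tendsto (fun N => F N t) atTop (𝓝 (f t))) : IsPosDefFun f := by
  intro n x
  have hK : Tendsto (fun N => Matrix.of fun i j => F N (x i - x j)) atTop
      (𝓝 (Matrix.of fun i j => f (x i - x j))) :=
    tendsto_pi_nhds.2 fun i => tendsto_pi_nhds.2 fun j => hlim _
  refine posSemidef_iff_dotProduct_mulVec.2 ⟨?_, fun v => ?_⟩
  · ext i j
    exact tendsto_nhds_unique ((hK.apply_nhds j).apply_nhds i |>.congr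
      fun N => (hF N x).isHermitian.apply i j) ((hK.apply_nhds i).apply_nhds j)
  · exact ge_of_tendsto' ((continuous_const.dotProduct (continuous_id.matrix_mulVec
      continuous_const)).tendsto _ |>.comp hK) fun N => (hF N x).dotProduct_mulVec_nonneg v

lemma integral {α : Type*} [MeasurableSpace α] {μ : Measure α} {F : α → ℝ → ℝ}
    (hF : ∀ᵐ a ∂μ, IsPosDefFun (F a)) (hint : ∀ t, Integrable (fun a => F a t) μ) :
    IsPosDefFun fun t => ∫ a, F a t ∂μ := by
  intro n x
  refine posSemidef_iff_dotProduct_mulVec.2 ⟨?_, fun v => ?_⟩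
  · ext i j
    exact integral_congr_ae (hF.mono fun a ha => (ha x).isHermitian.apply i j)
  · have hquad : star v ⬝ᵥ ((Matrix.of fun i j => ∫ a, F a (x i - x j) ∂μ) *ᵥ v)
        = ∫ a, star v ⬝ᵥ ((Matrix.of fun i j => F a (x i - x j)) *ᵥ v) ∂μ := by
      simp only [dotProduct, mulVec, of_apply, Finset.mul_sum]
      rw [integral_finsetSum _ fun i _ => integrable_finsetSum _ fun j _ =>
        ((hint _).mul_const _).const_mul _]
      refine Finset.sum_congr rfl fun i _ => ?_
      rw [integral_finsetSum _ fun j _ => ((hint _).mul_const _).const_mul _]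
      simp only [integral_const_mul, integral_mul_const]
    rw [hquad]
    exact integral_nonneg_of_ae (hF.mono fun a ha => (ha x).dotProduct_mulVec_nonneg v)

end IsPosDefFun

lemma Matrix.PosSemidef.map_ofReal {ι : Type*} [Fintype ι] {A : Matrix ι ι ℝ}
    (hA : A.PosSemidef) : (A.map ((↑) : ℝ → ℂ)).PosSemidef := by
  obtain ⟨m, v, rfl⟩ := posSemidef_iff_eq_sum_vecMulVec.1 hA
  convert posSemidef_sum Finset.univ fun k _ => posSemidef_vecMulVec_self_star fun i => (v k i : ℂ)
  ext i j
  simp [vecMulVec, Matrix.sum_apply]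

lemma IsPosDefFun.sum_mul_conj_nonneg {f : ℝ → ℝ} (hf : IsPosDefFun f) {n : ℕ}
    (x : Fin n → ℝ) (c : Fin n → ℂ) :
    0 ≤ ∑ i, ∑ j, c i * starRingEnd ℂ (c j) * (f (x i - x j) : ℂ) := by
  convert (hf x).map_ofReal.dotProduct_mulVec_nonneg (star c) using 1
  simp only [dotProduct, mulVec, star_star, Finset.mul_sum]
  refine Finset.sum_congr rfl fun i _ => Finset.sum_congr rfl fun j _ => ?_
  simp only [map_apply, of_apply, Pi.star_apply, RCLike.star_def]
  ring

lemma integral_cos_mul_gaussianReal (v : NNReal) (t : ℝ) :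
    ∫ ξ, cos (ξ * t) ∂gaussianReal 0 v = exp (-(v * t ^ 2 / 2)) := by
  have hint : Integrable (fun ξ : ℝ => Complex.exp (t * ξ * Complex.I)) (gaussianReal 0 v) :=
    Integrable.of_bound (by fun_prop) 1 (.of_forall fun ξ => by
      rw [← Complex.ofReal_mul, Complex.norm_exp_ofReal_mul_I])
  have h := congrArg Complex.re (charFun_gaussianReal (μ := 0) (v := v) t)
  rw [charFun_apply_real, ← RCLike.re_to_complex, ← integral_re hint] at h
  convert h using 1
  · refine integral_congr_ae (.of_forall fun ξ => ?_)
    dsimp only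
    rw [RCLike.re_to_complex, ← Complex.ofReal_mul, Complex.exp_ofReal_mul_I_re, mul_comm]
  · rw [show (t : ℂ) * (0 : ℝ) * Complex.I - (v : ℝ) * t ^ 2 / 2 = ((-(v * t ^ 2 / 2) : ℝ) : ℂ) by
      push_cast; ring, Complex.exp_ofReal_re]

lemma isPosDefFun_exp_neg_mul_sq {s : ℝ} (hs : 0 ≤ s) :
    IsPosDefFun fun t => exp (-(s * t ^ 2)) := by
  have h := IsPosDefFun.integral (μ := gaussianReal 0 (2 * s).toNNReal)
    (.of_forall isPosDefFun_cos_mul)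
    fun t => Integrable.of_bound (by fun_prop) 1 (.of_forall fun ξ => abs_cos_le_one _)
  simp only [integral_cos_mul_gaussianReal, Real.coe_toNNReal _ (by positivity : 0 ≤ 2 * s)] at h
  convert h using 3
  ring

lemma isPosDefFun_inv_one_add_sq : IsPosDefFun fun t => (1 + t ^ 2)⁻¹ := by
  have hexp : ∀ t s : ℝ, exp (-s) * exp (-(s * t ^ 2)) = exp (-(1 + t ^ 2) * s) := fun t s => by
    rw [← exp_add]
    ring_nf
  have h := IsPosDefFun.integral (μ := volume.restrict (Set.Ioi 0))
    (F := fun s t => exp (-s) * exp (-(s * t ^ 2)))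
    ((ae_restrict_mem measurableSet_Ioi).mono fun s hs =>
      (isPosDefFun_exp_neg_mul_sq hs.le).const_mul (exp_nonneg _))
    fun t => by
      simpa only [hexp, IntegrableOn] using exp_neg_integrableOn_Ioi 0 (by positivity : 0 < 1 + t ^ 2)
  convert h using 2 with t
  simp only [hexp]
  rw [integral_exp_mul_Ioi (by nlinarith) 0, mul_zero, exp_zero, neg_div_neg_eq, one_div]

lemma isPosDefFun_one_add_mul_sq_div {r : ℝ} (hr : r ^ 2 ≤ 1) :
    IsPosDefFun fun t => (1 + (r * t) ^ 2) / (1 + t ^ 2) := by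
  convert (isPosDefFun_const (sq_nonneg r)).add
    (isPosDefFun_inv_one_add_sq.const_mul (sub_nonneg.2 hr)) using 2 with t
  field_simp
  ring

lemma tendsto_prod_one_add_div_sq {t : ℝ} (ht : t ≠ 0) :
    Tendsto (fun N : ℕ => ∏ j ∈ Finset.range N, (1 + (t / (j + 1)) ^ 2)) atTop
      (𝓝 (sinh (π * t) / (π * t))) := by
  have h := tendsto_euler_sin_prod' (x := t * Complex.I) (by simp [ht])
  rw [← tendsto_ofReal_iff]
  convert h using 2 with N
  · push_cast
    refine Finset.prod_congr rfl fun j _ => ?_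
    rw [sineTerm, mul_pow, Complex.I_sq, div_pow]
    ring
  · rw [← mul_assoc, Complex.sin_mul_I]
    push_cast
    field_simp

lemma tendsto_prod_one_add_mul_sq_div {r t : ℝ} (hr : r ≠ 0) (ht : t ≠ 0) :
    Tendsto (fun N : ℕ =>
        ∏ j ∈ Finset.range N, (1 + (r * (t / (j + 1))) ^ 2) / (1 + (t / (j + 1)) ^ 2))
      atTop (𝓝 (sinh (π * r * t) / (r * sinh (π * t)))) := by
  have hsinh : sinh (π * t) ≠ 0 := sinh_ne_zero.2 (mul_ne_zero pi_ne_zero ht)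
  convert (tendsto_prod_one_add_div_sq (mul_ne_zero hr ht)).div (tendsto_prod_one_add_div_sq ht)
    (div_ne_zero hsinh (mul_ne_zero pi_ne_zero ht)) using 1
  · ext N
    rw [Pi.div_apply, Finset.prod_div_distrib]
    simp only [mul_div_assoc]
  · rw [mul_assoc]
    field_simp

theorem g_omega_posdef (b ω : ℝ) (hb : 0 < b) (hω : ω ∈ Set.Ioo 0 π)
    (g : ℝ → ℝ)
    (hg : ∀ x : ℝ, g x = if x = 0 then 1
      else (π / ω) * Real.sinh (ω * x / b) / Real.sinh (π * x / b))
    (n : ℕ) (x : Fin n → ℝ) (c : Fin n → ℂ) :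
    0 ≤ ∑ i, ∑ j, c i * (starRingEnd ℂ) (c j) * (g (x i - x j) : ℂ) := by
  set r := ω / π
  have hr0 : r ≠ 0 := div_ne_zero hω.1.ne' pi_ne_zero
  have hr1 : r ^ 2 ≤ 1 :=
    pow_le_one₀ (div_nonneg hω.1.le pi_pos.le) ((div_le_one pi_pos).2 hω.2.le)
  refine IsPosDefFun.sum_mul_conj_nonneg (IsPosDefFun.of_tendsto
    (F := fun N X => ∏ j ∈ Finset.range N,
      (1 + (r * (X / b / (j + 1))) ^ 2) / (1 + (X / b / (j + 1)) ^ 2))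
    (fun N => IsPosDefFun.finset_prod fun j _ =>
      ((isPosDefFun_one_add_mul_sq_div hr1).comp_div _).comp_div _) fun X => ?_) x c
  rw [hg X]
  split_ifs with hX
  · simp [hX]
  · convert tendsto_prod_one_add_mul_sq_div hr0 (div_ne_zero hX hb.ne') using 2
    simp only [r]
    field_simp
end

section
/- Let b > 0 and ω ∈ (0, π), and let G_{b,ω}(x) = sinh(ωx/b)/(2b·sin(ω)·sinh(πx/b)) for x ≠ 0, G_{b,ω}(0) = ω/(2πb·sin ω). Then 0 < G_{b,ω}(x) ≤ ω/(2πb·sin ω) for all x ∈ ℝ, and consequently, for every measurable Lebesgue-integrable V : ℝ → [0,∞), ∬_{ℝ×ℝ} V(x)·G_{b,ω}(x − y)²·V(y) dx dy ≤ (ω/(2πb·sin ω))²·(∫_ℝ V(x) dx)². In particular the kernel √(V(x))·G_{b,ω}(x−y)·√(V(y)) is square integrable on ℝ × ℝ. -/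
open MeasureTheory Real

private lemma sinh_le_mul_cosh' {u : ℝ} (hu : 0 ≤ u) : Real.sinh u ≤ u * Real.cosh u := by
  have h : MonotoneOn (fun t : ℝ => t * Real.cosh t - Real.sinh t) (Set.Ici 0) := by
    apply monotoneOn_of_deriv_nonneg (convex_Ici 0)
    · fun_prop
    · fun_prop
    · intro x hx
      have hx' : (0:ℝ) < x := by simpa [interior_Ici] using hx
      have hd : HasDerivAt (fun t : ℝ => t * Real.cosh t - Real.sinh t)
          (1 * Real.cosh x + x * Real.sinh x - Real.cosh x) x :=
        ((hasDerivAt_id x).mul (Real.hasDerivAt_cosh x)).sub (Real.hasDerivAt_sinh x)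
      rw [hd.deriv]
      have : 0 ≤ Real.sinh x := Real.sinh_nonneg_iff.mpr hx'.le
      nlinarith
  have := h Set.self_mem_Ici hu hu
  simpa using this

private lemma slope_sinh' {u v : ℝ} (hu : 0 ≤ u) (huv : u ≤ v) :
    v * Real.sinh u ≤ u * Real.sinh v := by
  have h : MonotoneOn (fun t : ℝ => u * Real.sinh t - t * Real.sinh u) (Set.Ici u) := by
    apply monotoneOn_of_deriv_nonneg (convex_Ici u)
    · fun_prop
    · fun_prop
    · intro x hx
      have hx' : u < x := by simpa [interior_Ici] using hx
      have hd : HasDerivAt (fun t : ℝ => u * Real.sinh t - t * Real.sinh u)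
          (u * Real.cosh x - 1 * Real.sinh u) x :=
        ((Real.hasDerivAt_sinh x).const_mul u).sub ((hasDerivAt_id x).mul_const _)
      rw [hd.deriv]
      have h1 : Real.cosh u ≤ Real.cosh x := by
        rw [Real.cosh_le_cosh, abs_of_nonneg hu, abs_of_nonneg (hu.trans hx'.le)]
        exact hx'.le
      nlinarith [sinh_le_mul_cosh' hu]
  have := h Set.self_mem_Ici huv huv
  simp only [sub_self] at this
  linarith

private lemma ratio_bound {a c x : ℝ} (ha : 0 < a) (hac : a < c) (hx : x ≠ 0) :
    0 < Real.sinh (a * x) / Real.sinh (c * x) ∧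
      Real.sinh (a * x) / Real.sinh (c * x) ≤ a / c := by
  have key : ∀ y : ℝ, 0 < y → 0 < Real.sinh (a * y) / Real.sinh (c * y) ∧
      Real.sinh (a * y) / Real.sinh (c * y) ≤ a / c := by
    intro y hy
    have hu : 0 < a * y := mul_pos ha hy
    have hv : 0 < c * y := mul_pos (ha.trans hac) hy
    have hsv : 0 < Real.sinh (c * y) := Real.sinh_pos_iff.mpr hv
    have hsu : 0 < Real.sinh (a * y) := Real.sinh_pos_iff.mpr hu
    refine ⟨div_pos hsu hsv, ?_⟩
    have hs := slope_sinh' hu.le (by nlinarith : a * y ≤ c * y)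
    rw [div_le_div_iff₀ hsv (ha.trans hac)]
    nlinarith
  rcases hx.lt_or_gt with h | h
  · have := key (-x) (by linarith)
    simpa [mul_neg, Real.sinh_neg, neg_div_neg_eq] using this
  · exact key x h

theorem birman_schwinger_hilbert_schmidt (b ω : ℝ) (hb : 0 < b) (hω : ω ∈ Set.Ioo 0 π)
    (G : ℝ → ℝ)
    (hG : ∀ x : ℝ, G x = if x = 0 then ω / (2 * π * b * Real.sin ω)
      else Real.sinh (ω * x / b) / (2 * b * Real.sin ω * Real.sinh (π * x / b))) :
    (∀ x : ℝ, 0 < G x ∧ G x ≤ ω / (2 * π * b * Real.sin ω)) ∧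
    ∀ V : ℝ → ℝ, Measurable V → (∀ x, 0 ≤ V x) → Integrable V →
      (∫ p : ℝ × ℝ, V p.1 * G (p.1 - p.2) ^ 2 * V p.2)
          ≤ (ω / (2 * π * b * Real.sin ω)) ^ 2 * (∫ x : ℝ, V x) ^ 2 ∧
      Integrable (fun p : ℝ × ℝ =>
        (Real.sqrt (V p.1) * G (p.1 - p.2) * Real.sqrt (V p.2)) ^ 2) := by
  obtain ⟨hω0, hωπ⟩ := hω
  have hsin : 0 < Real.sin ω := Real.sin_pos_of_pos_of_lt_pi hω0 hωπ
  have hπ : 0 < π := Real.pi_pos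
  set M : ℝ := ω / (2 * π * b * Real.sin ω) with hM
  have hMpos : 0 < M := div_pos hω0 (by positivity)
  have hpart1 : ∀ x : ℝ, 0 < G x ∧ G x ≤ M := by
    intro x
    rcases eq_or_ne x 0 with rfl | hx
    · rw [hG 0, if_pos rfl]
      exact ⟨hMpos, le_refl _⟩
    · rw [hG x, if_neg hx]
      have hr := ratio_bound (a := ω / b) (c := π / b) (by positivity)
        (by gcongr : ω / b < π / b) hx
      have e1 : ω / b * x = ω * x / b := by ring
      have e2 : π / b * x = π * x / b := by ring
      rw [e1, e2] at hr
      have eG : Real.sinh (ω * x / b) / (2 * b * Real.sin ω * Real.sinh (π * x / b))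
          = (Real.sinh (ω * x / b) / Real.sinh (π * x / b)) / (2 * b * Real.sin ω) := by
        ring
      rw [eG]
      constructor
      · exact div_pos hr.1 (by positivity)
      · have h2 : (Real.sinh (ω * x / b) / Real.sinh (π * x / b)) / (2 * b * Real.sin ω)
            ≤ (ω / b / (π / b)) / (2 * b * Real.sin ω) :=
          div_le_div_of_nonneg_right hr.2 (by positivity)
        refine h2.trans (le_of_eq ?_)
        rw [hM]
        field_simp
  refine ⟨hpart1, fun V hVm hV0 hVi => ?_⟩
  have hGm : Measurable G := by
    have hGe : G = fun x => if x = 0 then M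
        else Real.sinh (ω * x / b) / (2 * b * Real.sin ω * Real.sinh (π * x / b)) :=
      funext hG
    rw [hGe]
    apply Measurable.ite (MeasurableSet.singleton 0) measurable_const
    fun_prop
  have hfm : Measurable fun p : ℝ × ℝ => V p.1 * G (p.1 - p.2) ^ 2 * V p.2 := by
    have : Measurable fun p : ℝ × ℝ => G (p.1 - p.2) :=
      hGm.comp (measurable_fst.sub measurable_snd)
    exact ((hVm.comp measurable_fst).mul (this.pow_const 2)).mul (hVm.comp measurable_snd)
  have hgi : Integrable (fun p : ℝ × ℝ => M ^ 2 * (V p.1 * V p.2)) := by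
    rw [Measure.volume_eq_prod]
    exact (hVi.mul_prod hVi).const_mul _
  have hle : ∀ p : ℝ × ℝ, V p.1 * G (p.1 - p.2) ^ 2 * V p.2 ≤ M ^ 2 * (V p.1 * V p.2) := by
    intro p
    obtain ⟨h1, h2⟩ := hpart1 (p.1 - p.2)
    have hsq : G (p.1 - p.2) ^ 2 ≤ M ^ 2 := by nlinarith
    have := mul_le_mul_of_nonneg_left hsq (hV0 p.1)
    nlinarith [hV0 p.1, hV0 p.2, mul_nonneg (hV0 p.1) (hV0 p.2)]
  have hnonneg : ∀ p : ℝ × ℝ, 0 ≤ V p.1 * G (p.1 - p.2) ^ 2 * V p.2 := by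
    intro p
    have := (hpart1 (p.1 - p.2)).1
    have := hV0 p.1; have := hV0 p.2
    positivity
  have hfi : Integrable (fun p : ℝ × ℝ => V p.1 * G (p.1 - p.2) ^ 2 * V p.2) := by
    refine hgi.mono' hfm.aestronglyMeasurable (ae_of_all _ fun p => ?_)
    rw [Real.norm_eq_abs, abs_of_nonneg (hnonneg p)]
    exact hle p
  constructor
  · have hint : (∫ p : ℝ × ℝ, V p.1 * G (p.1 - p.2) ^ 2 * V p.2)
        ≤ ∫ p : ℝ × ℝ, M ^ 2 * (V p.1 * V p.2) :=
      integral_mono hfi hgi hle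
    refine hint.trans (le_of_eq ?_)
    rw [integral_const_mul, Measure.volume_eq_prod, integral_prod_mul, sq (∫ x : ℝ, V x)]
  · have : (fun p : ℝ × ℝ => (Real.sqrt (V p.1) * G (p.1 - p.2) * Real.sqrt (V p.2)) ^ 2)
        = fun p : ℝ × ℝ => V p.1 * G (p.1 - p.2) ^ 2 * V p.2 := by
      funext p
      rw [mul_pow, mul_pow, Real.sq_sqrt (hV0 p.1), Real.sq_sqrt (hV0 p.2)]
    rw [this]
    exact hfi
end
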